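/- arXiv:2605.03724 — 4 statements merged into one kernel-verified Lean document; each statement's English description precedes it below -/
import Mathlib

section
/- Let R ∈ ℝ^{m×n}, λ > 0, and u ∈ ℝ^{m×r}, v ∈ ℝ^{n×r} satisfy the first-order conditions R v + λ u = 0 and Rᵀ u + λ v = 0. Then uᵀu = vᵀv (the critical point is balanced). -/
open Matrix

theorem Matrix.smul_transpose_mul_self_eq_of_mul_eq_smul {α : Type*} [CommRing α]
    {m n r : Type*} [Fintype m] [Fintype n]
    {R : Matrix m n α} {u : Matrix m r α} {v : Matrix n r α} {a : α}
    (hv : R * v = a • u) (hu : Rᵀ * u = a • v) :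
    a • (uᵀ * u) = a • (vᵀ * v) :=
  calc a • (uᵀ * u) = uᵀ * (R * v) := by rw [hv, Matrix.mul_smul]
    _ = (Rᵀ * u)ᵀ * v := by rw [transpose_mul, transpose_transpose, Matrix.mul_assoc]
    _ = a • (vᵀ * v) := by rw [hu, transpose_smul, Matrix.smul_mul]

/-- Balancedness of critical points: if `R v + λ u = 0` and `Rᵀ u + λ v = 0` with `λ > 0`,
then `uᵀ u = vᵀ v`. -/
theorem lora_critical_point_balanced {m n r : ℕ}
    (R : Matrix (Fin m) (Fin n) ℝ) (lam : ℝ) (hlam : 0 < lam)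
    (u : Matrix (Fin m) (Fin r) ℝ) (v : Matrix (Fin n) (Fin r) ℝ)
    (h1 : R * v + lam • u = 0) (h2 : Rᵀ * u + lam • v = 0) :
    uᵀ * u = vᵀ * v := by
  have hv : R * v = (-lam) • u := by rw [neg_smul]; exact eq_neg_of_add_eq_zero_left h1
  have hu : Rᵀ * u = (-lam) • v := by rw [neg_smul]; exact eq_neg_of_add_eq_zero_left h2
  exact smul_right_injective _ (neg_ne_zero.mpr hlam.ne')
    (smul_transpose_mul_self_eq_of_mul_eq_smul hv hu)
end

section
/- Let u ∈ ℝ^{m×r}, v ∈ ℝ^{n×r} with uᵀu = vᵀv (balanced). If rank(uvᵀ) < r, then there exists a unit vector w ∈ ℝ^r with u w = 0 and v w = 0. -/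
/-!
Balancedness says that `u` and `v` have the same Gram matrix. Since `ker Aᵀ A = ker A` over an
ordered field, `u` and `v` have the same kernel; and `(u vᵀ)ᵀ (u vᵀ) = v (uᵀ u) vᵀ = (v vᵀ)ᵀ (v vᵀ)`
gives `rank (u vᵀ) = rank (v vᵀ) = rank v`. So `rank v < r`, the common kernel is nonzero, and
any nonzero vector in it can be normalised.
-/

open Matrix

namespace Matrix

section LinearOrderedField

variable {R : Type*} [Field R] [LinearOrder R] [IsStrictOrderedRing R] {m n o : Type*}
  [Fintype m] [Fintype n] [Fintype o]

theorem ker_mulVecLin_eq_of_transpose_mul_self_eq {A : Matrix m o R} {B : Matrix n o R}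
    (h : Aᵀ * A = Bᵀ * B) : LinearMap.ker A.mulVecLin = LinearMap.ker B.mulVecLin := by
  rw [← ker_mulVecLin_transpose_mul_self, h, ker_mulVecLin_transpose_mul_self]

theorem rank_mul_transpose_eq_of_transpose_mul_self_eq {A : Matrix m o R}
    {B : Matrix n o R} (h : Aᵀ * A = Bᵀ * B) : (A * Bᵀ).rank = B.rank := by
  have hgram : (A * Bᵀ)ᵀ * (A * Bᵀ) = (B * Bᵀ)ᵀ * (B * Bᵀ) := by
    simp only [transpose_mul, transpose_transpose, Matrix.mul_assoc]
    rw [← Matrix.mul_assoc Aᵀ, h, Matrix.mul_assoc]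
  rw [← rank_transpose_mul_self, hgram, rank_transpose_mul_self, rank_self_mul_transpose]

end LinearOrderedField

theorem ker_mulVecLin_ne_bot_of_rank_lt {K : Type*} [Field K] {m n : Type*}
    [Fintype n] {A : Matrix m n K} (h : A.rank < Fintype.card n) :
    LinearMap.ker A.mulVecLin ≠ ⊥ := by
  intro hker
  have := A.mulVecLin.finrank_range_add_finrank_ker
  rw [hker, finrank_bot, add_zero, Module.finrank_fintype_fun_eq_card] at this
  exact h.ne this

end Matrix

theorem Submodule.exists_mem_sum_sq_eq_one {ι : Type*} [Fintype ι] {p : Submodule ℝ (ι → ℝ)}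
    (hp : p ≠ ⊥) : ∃ w ∈ p, ∑ i, w i ^ 2 = 1 := by
  obtain ⟨w, hwp, hw⟩ := p.ne_bot_iff.mp hp
  have hpos : 0 < ∑ i, w i ^ 2 := by
    obtain ⟨i, hi⟩ := Function.ne_iff.mp hw
    exact Finset.sum_pos' (fun j _ => sq_nonneg (w j)) ⟨i, Finset.mem_univ i, sq_pos_of_ne_zero hi⟩
  refine ⟨(√(∑ i, w i ^ 2))⁻¹ • w, p.smul_mem _ hwp, ?_⟩
  simp only [Pi.smul_apply, smul_eq_mul, mul_pow, ← Finset.mul_sum, inv_pow,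
    Real.sq_sqrt hpos.le]
  exact inv_mul_cancel₀ hpos.ne'

/-- If `(u, v)` is balanced (`uᵀu = vᵀv`) and `rank (u vᵀ) < r`, then there is a unit vector
`w ∈ ℝ^r` with `u w = 0` and `v w = 0`. -/
theorem balanced_rank_deficient_common_null {m n r : ℕ}
    (u : Matrix (Fin m) (Fin r) ℝ) (v : Matrix (Fin n) (Fin r) ℝ)
    (hbal : uᵀ * u = vᵀ * v) (hrank : (u * vᵀ).rank < r) :
    ∃ w : Fin r → ℝ, (∑ i, w i ^ 2 = 1) ∧ u.mulVec w = 0 ∧ v.mulVec w = 0 := by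
  have hv : v.rank < Fintype.card (Fin r) := by
    rwa [Fintype.card_fin, ← rank_mul_transpose_eq_of_transpose_mul_self_eq hbal]
  obtain ⟨w, hwv, hw⟩ := Submodule.exists_mem_sum_sq_eq_one (ker_mulVecLin_ne_bot_of_rank_lt hv)
  have hwu : w ∈ LinearMap.ker u.mulVecLin := by
    rwa [ker_mulVecLin_eq_of_transpose_mul_self_eq hbal]
  exact ⟨w, hw, hwu, hwv⟩
end

section
/- Let u ∈ ℝ^{m×r}, v ∈ ℝ^{n×r} be balanced, i.e., uᵀu = vᵀv. Then rank(u) = rank(v) = rank(uvᵀ). -/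
open Matrix

namespace Matrix

section Gram

variable {m n p R : Type*} [Fintype m] [Fintype n] [Fintype p]
  [Field R] [LinearOrder R] [IsStrictOrderedRing R]

theorem rank_eq_of_transpose_mul_self_eq {A : Matrix m n R} {B : Matrix p n R}
    (h : Aᵀ * A = Bᵀ * B) : A.rank = B.rank := by
  rw [← rank_transpose_mul_self A, h, rank_transpose_mul_self]

theorem rank_eq_of_mul_transpose_self_eq {A : Matrix m n R} {B : Matrix m p R}
    (h : A * Aᵀ = B * Bᵀ) : A.rank = B.rank := by
  rw [← rank_self_mul_transpose A, h, rank_self_mul_transpose]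

end Gram

theorem mul_transpose_mul_mul_transpose_eq_of_transpose_mul_self_eq
    {m n p R : Type*} [Fintype m] [Fintype n] [Fintype p] [CommRing R]
    {A : Matrix m n R} {B : Matrix p n R} (h : Aᵀ * A = Bᵀ * B) :
    (A * Bᵀ) * (A * Bᵀ)ᵀ = (A * Aᵀ) * (A * Aᵀ)ᵀ := by
  simp only [transpose_mul, transpose_transpose, Matrix.mul_assoc]
  rw [← Matrix.mul_assoc Bᵀ, ← h, Matrix.mul_assoc]

end Matrix

/-- If `(u, v)` is balanced (`uᵀu = vᵀv`), then `rank u = rank v = rank (u vᵀ)`. -/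
theorem balanced_rank_eq {m n r : ℕ}
    (u : Matrix (Fin m) (Fin r) ℝ) (v : Matrix (Fin n) (Fin r) ℝ)
    (hbal : uᵀ * u = vᵀ * v) :
    u.rank = v.rank ∧ u.rank = (u * vᵀ).rank := by
  refine ⟨rank_eq_of_transpose_mul_self_eq hbal, ?_⟩
  calc u.rank = (u * uᵀ).rank := (rank_self_mul_transpose u).symm
    _ = (u * vᵀ).rank := (rank_eq_of_mul_transpose_self_eq
          (mul_transpose_mul_mul_transpose_eq_of_transpose_mul_self_eq hbal)).symm
end

section
/- Let λ > 0, let u = U_u Σ, v = U_v Σ be a balanced SVD factorization with U_u, U_v having orthonormal columns and Σ ∈ ℝ^{r×r} diagonal positive definite, and let R ∈ ℝ^{m×n} satisfy R v + λ u = 0 and Rᵀ u + λ v = 0. Then U_uᵀ R U_v = −λ I_r, U_uᵀ R U_v^⊥ = 0 and (U_u^⊥)ᵀ R U_v = 0; specifically R = −λ U_u U_vᵀ + U_u^⊥ R₂₂ (U_v^⊥)ᵀ for some R₂₂ ∈ ℝ^{(m−r)×(n−r)}, where U_u^⊥, U_v^⊥ are orthonormal complements of U_u, U_v. -/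
open Matrix

/-- Residual block structure at a balanced critical point: if `u = U_u Σ`, `v = U_v Σ` with
orthonormal `U_u, U_v`, orthonormal complements `U_u^⊥, U_v^⊥`, invertible positive diagonal
`Σ`, and `R v + λ u = 0`, `Rᵀ u + λ v = 0`, then `U_uᵀ R U_v = −λ I` and
`R = −λ U_u U_vᵀ + U_u^⊥ R₂₂ (U_v^⊥)ᵀ` for some `R₂₂`. -/
theorem residual_block_structure {m n r : ℕ}
    (lam : ℝ) (hlam : 0 < lam)
    (Uu : Matrix (Fin m) (Fin r) ℝ) (Uv : Matrix (Fin n) (Fin r) ℝ)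
    (Uup : Matrix (Fin m) (Fin (m - r)) ℝ) (Uvp : Matrix (Fin n) (Fin (n - r)) ℝ)
    (S : Matrix (Fin r) (Fin r) ℝ)
    (hUu : Uuᵀ * Uu = 1) (hUv : Uvᵀ * Uv = 1)
    (hUup : Uupᵀ * Uup = 1) (hUvp : Uvpᵀ * Uvp = 1)
    (hcross_u : Uuᵀ * Uup = 0) (hcross_v : Uvᵀ * Uvp = 0)
    (hcomp_u : Uu * Uuᵀ + Uup * Uupᵀ = 1) (hcomp_v : Uv * Uvᵀ + Uvp * Uvpᵀ = 1)
    (hdiag : S.IsDiag) (hpos : ∀ i, 0 < S i i)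
    (u : Matrix (Fin m) (Fin r) ℝ) (v : Matrix (Fin n) (Fin r) ℝ)
    (hu : u = Uu * S) (hv : v = Uv * S)
    (R : Matrix (Fin m) (Fin n) ℝ)
    (h1 : R * v + lam • u = 0) (h2 : Rᵀ * u + lam • v = 0) :
    Uuᵀ * R * Uv = -lam • (1 : Matrix (Fin r) (Fin r) ℝ) ∧
      ∃ R₂₂ : Matrix (Fin (m - r)) (Fin (n - r)) ℝ,
        R = -lam • (Uu * Uvᵀ) + Uup * R₂₂ * Uvpᵀ := by
  -- S is invertible
  set Sinv : Matrix (Fin r) (Fin r) ℝ := Matrix.diagonal (fun i => (S i i)⁻¹) with hSinv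
  have hSdiag : S = Matrix.diagonal S.diag := hdiag.diagonal_diag.symm
  have hSS : S * Sinv = 1 := by
    have e : S * Sinv = Matrix.diagonal (fun i => S.diag i * (S i i)⁻¹) := by
      conv_lhs => rw [hSdiag]
      rw [hSinv, Matrix.diagonal_mul_diagonal]
    rw [e]
    ext i j
    rcases eq_or_ne i j with h | h
    · subst h
      simp [Matrix.diag, mul_inv_cancel₀ (hpos i).ne', Matrix.one_apply_eq]
    · simp [Matrix.diagonal_apply_ne _ h, Matrix.one_apply_ne h]
  -- From h1 : R * (Uv * S) = -(lam • (Uu * S))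
  have h1' : R * Uv = -lam • Uu := by
    have e : R * (Uv * S) = (-lam • Uu) * S := by
      have := eq_neg_of_add_eq_zero_left h1
      rw [hv, hu] at this
      rw [this]
      simp [Matrix.smul_mul, neg_smul]
    calc R * Uv = R * Uv * (S * Sinv) := by rw [hSS, Matrix.mul_one]
      _ = (R * (Uv * S)) * Sinv := by simp [Matrix.mul_assoc]
      _ = ((-lam • Uu) * S) * Sinv := by rw [e]
      _ = -lam • Uu * (S * Sinv) := by simp [Matrix.mul_assoc]
      _ = -lam • Uu := by rw [hSS, Matrix.mul_one]
  have h2' : Rᵀ * Uu = -lam • Uv := by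
    have e : Rᵀ * (Uu * S) = (-lam • Uv) * S := by
      have := eq_neg_of_add_eq_zero_left h2
      rw [hv, hu] at this
      rw [this]
      simp [Matrix.smul_mul, neg_smul]
    calc Rᵀ * Uu = Rᵀ * Uu * (S * Sinv) := by rw [hSS, Matrix.mul_one]
      _ = (Rᵀ * (Uu * S)) * Sinv := by simp [Matrix.mul_assoc]
      _ = ((-lam • Uv) * S) * Sinv := by rw [e]
      _ = -lam • Uv * (S * Sinv) := by simp [Matrix.mul_assoc]
      _ = -lam • Uv := by rw [hSS, Matrix.mul_one]
  have hRUv : Uuᵀ * R * Uv = -lam • (1 : Matrix (Fin r) (Fin r) ℝ) := by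
    rw [Matrix.mul_assoc, h1', Matrix.mul_smul, hUu]
  refine ⟨hRUv, Uupᵀ * R * Uvp, ?_⟩
  have hblock1 : Uupᵀ * R * Uv = 0 := by
    rw [Matrix.mul_assoc, h1', Matrix.mul_smul]
    have : Uupᵀ * Uu = 0 := by
      have := congrArg Matrix.transpose hcross_u
      simpa [Matrix.transpose_mul] using this
    rw [this, smul_zero]
  have hblock2 : Uuᵀ * R * Uvp = 0 := by
    have : Uvpᵀ * Rᵀ * Uu = 0 := by
      rw [Matrix.mul_assoc, h2', Matrix.mul_smul]
      have hz : Uvpᵀ * Uv = 0 := by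
        have := congrArg Matrix.transpose hcross_v
        simpa [Matrix.transpose_mul] using this
      rw [hz, smul_zero]
    have := congrArg Matrix.transpose this
    simpa [Matrix.transpose_mul, Matrix.mul_assoc] using this
  calc R = (1 : Matrix (Fin m) (Fin m) ℝ) * R * (1 : Matrix (Fin n) (Fin n) ℝ) := by rw [Matrix.one_mul, Matrix.mul_one]
    _ = (Uu * Uuᵀ + Uup * Uupᵀ) * R * (Uv * Uvᵀ + Uvp * Uvpᵀ) := by rw [hcomp_u, hcomp_v]
    _ = Uu * (Uuᵀ * R * Uv) * Uvᵀ + Uu * (Uuᵀ * R * Uvp) * Uvpᵀ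
        + Uup * (Uupᵀ * R * Uv) * Uvᵀ + Uup * (Uupᵀ * R * Uvp) * Uvpᵀ := by
      simp only [Matrix.add_mul, Matrix.mul_add, Matrix.mul_assoc]
      abel
    _ = -lam • (Uu * Uvᵀ) + Uup * (Uupᵀ * R * Uvp) * Uvpᵀ := by
      rw [hRUv, hblock1, hblock2]
      simp [Matrix.mul_smul, Matrix.smul_mul, Matrix.mul_assoc]
end
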